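/- For every λ > 0 and all (S, U, P) ∈ ℝ³, the polynomial identity 2S·F_S(S,U,P) + 2U·F_U(S,U,P) + P·F_P(S,U,P) = ((2/√3)S + 4S² − 2U² + 2P²)·(S² + U² + P²/2 − 1/3) holds. In particular, the ellipsoid E = {(S,U,P) : S² + U² + P²/2 = 1/3} (the Bianchi I constraint surface) is invariant under the flow of the reduced vector field F. -/

import Mathlib

/-- `S`-component of the reduced vector field `F`. -/
noncomputable def FS (lam S U P : ℝ) : ℝ :=
  -1 / (3 * Real.sqrt 3) - (2 / 3) * S + S ^ 2 / Real.sqrt 3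
    + U ^ 2 / Real.sqrt 3 + P ^ 2 / (2 * Real.sqrt 3)
    + 2 * S ^ 3 - S * U ^ 2 + S * P ^ 2

/-- `U`-component of the reduced vector field `F`. -/
noncomputable def FU (lam S U P : ℝ) : ℝ :=
  U * (1 / 3 - (lam / 2) * P + 2 * S ^ 2 - U ^ 2 + P ^ 2)

/-- `P`-component of the reduced vector field `F`. -/
noncomputable def FP (lam S U P : ℝ) : ℝ :=
  -(2 / 3) * P + lam * U ^ 2 + 2 * S ^ 2 * P - U ^ 2 * P + P ^ 3

/-! The quadric `f = 1/3` is invariant because its defining function is a factor of its own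
derivative along `F`: `df/dτ = G · (f - 1/3)` with `G` the first factor of the identity. The
defect `f - 1/3` along a trajectory therefore solves a scalar linear ODE; multiplying by the
integrating factor `exp (-∫ G)` makes it constant, so it vanishes everywhere once it vanishes
somewhere. -/

open Real

theorem eq_zero_of_hasDerivAt_mul_self {f G : ℝ → ℝ} (hG : Continuous G)
    (hf : ∀ t, HasDerivAt f (G t * f t) t) {a : ℝ} (ha : f a = 0) (t : ℝ) : f t = 0 := by
  set I : ℝ → ℝ := fun s => ∫ r in a..s, G r
  have hI : ∀ s, HasDerivAt I (G s) s := fun s => (hG.integral_hasStrictDerivAt a s).hasDerivAt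
  have hderiv : ∀ s, HasDerivAt (fun s => f s * exp (-I s)) 0 s := fun s => by
    refine ((hf s).mul (hI s).neg.exp).congr_deriv ?_
    ring
  have hconst : f t * exp (-I t) = f a * exp (-I a) :=
    is_const_of_deriv_eq_zero (fun s => (hderiv s).differentiableAt)
      (fun s => (hderiv s).deriv) t a
  simpa [ha, (exp_pos _).ne'] using hconst

theorem ellipsoid_flux_eq (lam S U P : ℝ) :
    2 * S * FS lam S U P + 2 * U * FU lam S U P + P * FP lam S U P
      = ((2 / √3) * S + 4 * S ^ 2 - 2 * U ^ 2 + 2 * P ^ 2)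
          * (S ^ 2 + U ^ 2 + P ^ 2 / 2 - 1 / 3) := by
  unfold FS FU FP
  field_simp
  ring

theorem hasDerivAt_ellipsoid_defect {lam : ℝ} {S U P : ℝ → ℝ}
    (hS : ∀ τ, HasDerivAt S (FS lam (S τ) (U τ) (P τ)) τ)
    (hU : ∀ τ, HasDerivAt U (FU lam (S τ) (U τ) (P τ)) τ)
    (hP : ∀ τ, HasDerivAt P (FP lam (S τ) (U τ) (P τ)) τ) (τ : ℝ) :
    HasDerivAt (fun τ => S τ ^ 2 + U τ ^ 2 + P τ ^ 2 / 2 - 1 / 3)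
      (((2 / √3) * S τ + 4 * S τ ^ 2 - 2 * U τ ^ 2 + 2 * P τ ^ 2)
        * (S τ ^ 2 + U τ ^ 2 + P τ ^ 2 / 2 - 1 / 3)) τ := by
  rw [← ellipsoid_flux_eq]
  refine ((((hS τ).pow 2).add ((hU τ).pow 2)).add (((hP τ).pow 2).div_const 2)).sub_const
    (1 / 3) |>.congr_deriv ?_
  push_cast
  ring

theorem ellipsoid_invariant (lam : ℝ) :
    (∀ S U P : ℝ,
      2 * S * FS lam S U P + 2 * U * FU lam S U P + P * FP lam S U P
        = ((2 / Real.sqrt 3) * S + 4 * S ^ 2 - 2 * U ^ 2 + 2 * P ^ 2)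
            * (S ^ 2 + U ^ 2 + P ^ 2 / 2 - 1 / 3)) ∧
    (∀ S U P : ℝ → ℝ,
      (∀ τ, HasDerivAt S (FS lam (S τ) (U τ) (P τ)) τ) →
      (∀ τ, HasDerivAt U (FU lam (S τ) (U τ) (P τ)) τ) →
      (∀ τ, HasDerivAt P (FP lam (S τ) (U τ) (P τ)) τ) →
      ∀ τ₀, S τ₀ ^ 2 + U τ₀ ^ 2 + P τ₀ ^ 2 / 2 = 1 / 3 →
        ∀ τ, S τ ^ 2 + U τ ^ 2 + P τ ^ 2 / 2 = 1 / 3) := by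
  refine ⟨ellipsoid_flux_eq lam, fun S U P hS hU hP τ₀ h₀ τ => ?_⟩
  have : Continuous S := Differentiable.continuous fun τ => (hS τ).differentiableAt
  have : Continuous U := Differentiable.continuous fun τ => (hU τ).differentiableAt
  have : Continuous P := Differentiable.continuous fun τ => (hP τ).differentiableAt
  have hdefect := eq_zero_of_hasDerivAt_mul_self (by fun_prop)
    (hasDerivAt_ellipsoid_defect hS hU hP) (a := τ₀) (by simp [h₀]) τ
  linarith
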